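/- arXiv:2111.01060 — 3 statements merged into one kernel-verified Lean document; each statement's English description precedes it below -/
import Mathlib

section
/- Let f : {−1,1}^n → {−1,1} and C : {−1,1}^n → {−1,1}^m be arbitrary functions, let Q ⊆ [m] with |Q| = q, and let ε > 0. If for every subset S ⊆ Q one has |E_x[f(x) · ∏_{j∈S} C(x)_j]| < ε/2^q, where x is uniform over {−1,1}^n, then for every function g : {−1,1}^q → {−1,1}, Pr_x[g(C(x)_Q) = f(x)] < (1 + ε)/2, where C(x)_Q denotes the restriction of C(x) to the coordinates in Q. -/
open scoped Classical

/-- The identification of `Bool` with the multiplicative cube `{−1, 1} ⊆ ℝ`. -/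
noncomputable def pmOfBool (b : Bool) : ℝ := if b then 1 else -1

/-!
With `y = C(x)_Q` and `±1`-valued `f`, `g`, we have `Pr[g(y) = f] = (1 + 𝔼[g(y) f]) / 2`.
Expanding `g` in the Walsh basis, `g = ∑_T ĝ(T) χ_T` with `|ĝ(T)| ≤ 1`, gives
`𝔼[g(y) f] = ∑_T ĝ(T) 𝔼[f χ_T(y)]`, a sum of `2^q` terms each of absolute value below `ε / 2^q`.
-/

open Finset
open scoped BigOperators

lemma pmOfBool_mul_pmOfBool (a b : Bool) :
    pmOfBool a * pmOfBool b = if a = b then 1 else -1 := by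
  cases a <;> cases b <;> norm_num [pmOfBool]

lemma abs_pmOfBool (b : Bool) : |pmOfBool b| = 1 := by
  cases b <;> simp [pmOfBool]

lemma pmOfBool_decide_eq_one {x : ℝ} (hx : x = 1 ∨ x = -1) : pmOfBool (decide (x = 1)) = x := by
  rcases hx with rfl | rfl <;> norm_num [pmOfBool]

lemma ite_eq_one_add_mul_div_two {a b : ℝ} (ha : a = 1 ∨ a = -1) (hb : b = 1 ∨ b = -1) :
    (if a = b then 1 else 0 : ℝ) = (1 + a * b) / 2 := by
  rcases ha with rfl | rfl <;> rcases hb with rfl | rfl <;> norm_num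

lemma card_filter_eq_div_card {Ω : Type*} [Fintype Ω] [Nonempty Ω] {a b : Ω → ℝ}
    (ha : ∀ s, a s = 1 ∨ a s = -1) (hb : ∀ s, b s = 1 ∨ b s = -1) :
    (#{s | a s = b s} : ℝ) / Fintype.card Ω = (1 + 𝔼 s, a s * b s) / 2 := by
  simp only [natCast_card_filter, ← Fintype.expect_eq_sum_div_card,
    ite_eq_one_add_mul_div_two (ha _) (hb _)]
  rw [← expect_div, expect_add_distrib, Fintype.expect_one]

namespace BoolCube

variable {ι : Type*}

noncomputable def walsh (T : Finset ι) (v : ι → Bool) : ℝ := ∏ j ∈ T, pmOfBool (v j)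

lemma abs_walsh (T : Finset ι) (v : ι → Bool) : |walsh T v| = 1 := by
  simp [walsh, abs_prod, abs_pmOfBool]

variable [Fintype ι]

noncomputable def fourierCoeff (h : (ι → Bool) → ℝ) (T : Finset ι) : ℝ := 𝔼 v, h v * walsh T v

lemma sum_walsh_mul_walsh (v w : ι → Bool) :
    ∑ T, walsh T v * walsh T w = if v = w then (Fintype.card (ι → Bool) : ℝ) else 0 := by
  have hprod : ∑ T, walsh T v * walsh T w = ∏ j, (1 + pmOfBool (v j) * pmOfBool (w j)) := by
    simp only [prod_one_add, powerset_univ, walsh, prod_mul_distrib]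
  rw [hprod]
  split_ifs with hvw
  · subst hvw
    simp only [pmOfBool_mul_pmOfBool, if_true, prod_const, card_univ, Fintype.card_fun,
      Fintype.card_bool]
    norm_num
  · obtain ⟨j, hj⟩ := Function.ne_iff.mp hvw
    exact prod_eq_zero (mem_univ j) (by simp [pmOfBool_mul_pmOfBool, hj])

theorem sum_fourierCoeff_mul_walsh (h : (ι → Bool) → ℝ) (w : ι → Bool) :
    ∑ T, fourierCoeff h T * walsh T w = h w := by
  calc ∑ T, fourierCoeff h T * walsh T w
      = 𝔼 v, (∑ T, walsh T v * walsh T w) * h v := by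
        simp only [fourierCoeff, expect_mul, ← expect_sum_comm, sum_mul]
        congr! 2 with v
        ring
    _ = h w := by simp only [sum_walsh_mul_walsh, expect_boole_mul']

lemma abs_fourierCoeff_le_one {h : (ι → Bool) → ℝ} (hh : ∀ v, |h v| ≤ 1) (T : Finset ι) :
    |fourierCoeff h T| ≤ 1 :=
  calc |fourierCoeff h T| ≤ 𝔼 v, |h v * walsh T v| := abs_expect_le _ _
    _ ≤ 𝔼 _v : ι → Bool, (1 : ℝ) :=
        expect_le_expect fun v _ => by rw [abs_mul, abs_walsh, mul_one]; exact hh v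
    _ = 1 := Fintype.expect_one

theorem abs_expect_mul_comp_le_sum {Ω : Type*} [Fintype Ω] (F : Ω → ℝ) (Y : Ω → ι → Bool)
    {h : (ι → Bool) → ℝ} (hh : ∀ v, |h v| ≤ 1) :
    |𝔼 s, F s * h (Y s)| ≤ ∑ T, |𝔼 s, F s * walsh T (Y s)| := by
  have hexpand : 𝔼 s, F s * h (Y s) = ∑ T, fourierCoeff h T * 𝔼 s, F s * walsh T (Y s) := by
    simp only [← sum_fourierCoeff_mul_walsh h, mul_sum, ← expect_sum_comm, mul_expect]
    congr! 2 with s T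
    ring
  rw [hexpand]
  refine (abs_sum_le_sum_abs _ _).trans (sum_le_sum fun T _ => ?_)
  rw [abs_mul]
  exact mul_le_of_le_one_left (abs_nonneg _) (abs_fourierCoeff_le_one hh T)

theorem card_filter_comp_eq_div_card_lt {Ω : Type*} [Fintype Ω] [Nonempty Ω] {F : Ω → ℝ}
    (hF : ∀ s, F s = 1 ∨ F s = -1) (Y : Ω → ι → Bool) {h : (ι → Bool) → ℝ}
    (hh : ∀ v, h v = 1 ∨ h v = -1) {δ : ℝ} (hcorr : ∀ T, |𝔼 s, F s * walsh T (Y s)| < δ) :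
    (#{s | h (Y s) = F s} : ℝ) / Fintype.card Ω < (1 + 2 ^ Fintype.card ι * δ) / 2 := by
  have hh_abs : ∀ v, |h v| ≤ 1 := fun v => by rcases hh v with hv | hv <;> simp [hv]
  have hcorrelation : 𝔼 s, h (Y s) * F s < 2 ^ Fintype.card ι * δ :=
    calc 𝔼 s, h (Y s) * F s ≤ |𝔼 s, F s * h (Y s)| := by simp only [mul_comm, le_abs_self]
      _ ≤ ∑ T, |𝔼 s, F s * walsh T (Y s)| := abs_expect_mul_comp_le_sum F Y hh_abs
      _ < ∑ _T : Finset ι, δ := sum_lt_sum_of_nonempty univ_nonempty fun T _ => hcorr T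
      _ = 2 ^ Fintype.card ι * δ := by simp [Fintype.card_finset]
  rw [card_filter_eq_div_card (fun s => hh (Y s)) hF]
  linarith

end BoolCube

theorem low_correlation_implies_no_good_predictor_general
    {n m q : ℕ} (Q : Finset (Fin m)) (hQ : Q.card = q) (ε : ℝ)
    (f : (Fin n → ℝ) → ℝ) (C : (Fin n → ℝ) → Fin m → ℝ)
    (hf : ∀ s : Fin n → Bool,
      f (fun i => pmOfBool (s i)) = 1 ∨ f (fun i => pmOfBool (s i)) = -1)
    (hC : ∀ (s : Fin n → Bool) (j : Fin m),
      C (fun i => pmOfBool (s i)) j = 1 ∨ C (fun i => pmOfBool (s i)) j = -1)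
    (hcorr : ∀ S ⊆ Q,
      |(∑ s : Fin n → Bool,
          f (fun i => pmOfBool (s i)) * ∏ j ∈ S, C (fun i => pmOfBool (s i)) j) /
        2 ^ n| < ε / 2 ^ q)
    (g : (Fin q → ℝ) → ℝ)
    (hg : ∀ v : Fin q → Bool,
      g (fun j => pmOfBool (v j)) = 1 ∨ g (fun j => pmOfBool (v j)) = -1) :
    ((Finset.univ.filter fun s : Fin n → Bool =>
        g (fun j => C (fun i => pmOfBool (s i)) (Q.orderIsoOfFin hQ j).1) =
          f (fun i => pmOfBool (s i))).card : ℝ) / 2 ^ n < (1 + ε) / 2 := by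
  set e := Q.orderEmbOfFin hQ
  set Y : (Fin n → Bool) → Fin q → Bool :=
    fun s j => decide (C (fun i => pmOfBool (s i)) (e j) = 1)
  have hY : ∀ s j, pmOfBool (Y s j) = C (fun i => pmOfBool (s i)) (e j) :=
    fun s j => pmOfBool_decide_eq_one (hC s (e j))
  have hcorrY : ∀ T, |𝔼 s, f (fun i => pmOfBool (s i)) * BoolCube.walsh T (Y s)| < ε / 2 ^ q := by
    intro T
    have hT : T.map e.toEmbedding ⊆ Q := by simp [subset_iff, e]
    simpa [Fintype.expect_eq_sum_div_card, BoolCube.walsh, hY] using hcorr _ hT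
  have hscale : 2 ^ q * (ε / 2 ^ q) = ε := by field_simp
  have key := BoolCube.card_filter_comp_eq_div_card_lt hf Y hg hcorrY
  simp only [hY, e, hscale, Fintype.card_fun, Fintype.card_fin, Fintype.card_bool, Nat.cast_pow,
    Nat.cast_ofNat] at key
  -- `↑(Q.orderIsoOfFin hQ j)` is `Q.orderEmbOfFin hQ j` by definition
  exact key

/-- Let `f : {−1,1}^n → {−1,1}` and `C : {−1,1}^n → {−1,1}^m` be
arbitrary functions, `Q ⊆ [m]` with `|Q| = q`, and `ε > 0`.  If for every `S ⊆ Q`,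
`|E_x[f(x)·∏_{j∈S} C(x)_j]| < ε/2^q` (for uniform `x ∈ {−1,1}^n`), then for every
`g : {−1,1}^q → {−1,1}`, `Pr_x[g(C(x)_Q) = f(x)] < (1+ε)/2`, where `C(x)_Q` lists the
coordinates of `C(x)` indexed by `Q` in increasing order. -/
theorem low_correlation_implies_no_good_predictor
    {n m q : ℕ} (Q : Finset (Fin m)) (hQ : Q.card = q) (ε : ℝ) (hε : 0 < ε)
    (f : (Fin n → ℝ) → ℝ) (C : (Fin n → ℝ) → Fin m → ℝ)
    (hf : ∀ s : Fin n → Bool,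
      f (fun i => pmOfBool (s i)) = 1 ∨ f (fun i => pmOfBool (s i)) = -1)
    (hC : ∀ (s : Fin n → Bool) (j : Fin m),
      C (fun i => pmOfBool (s i)) j = 1 ∨ C (fun i => pmOfBool (s i)) j = -1)
    (hcorr : ∀ S ⊆ Q,
      |(∑ s : Fin n → Bool,
          f (fun i => pmOfBool (s i)) * ∏ j ∈ S, C (fun i => pmOfBool (s i)) j) /
        2 ^ n| < ε / 2 ^ q)
    (g : (Fin q → ℝ) → ℝ)
    (hg : ∀ v : Fin q → Bool,
      g (fun j => pmOfBool (v j)) = 1 ∨ g (fun j => pmOfBool (v j)) = -1) :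
    ((Finset.univ.filter fun s : Fin n → Bool =>
        g (fun j => C (fun i => pmOfBool (s i)) (Q.orderIsoOfFin hQ j).1) =
          f (fun i => pmOfBool (s i))).card : ℝ) / 2 ^ n < (1 + ε) / 2 :=
  low_correlation_implies_no_good_predictor_general Q hQ ε f C hf hC hcorr g hg
end

section
/- Let q ≥ 1 be an integer, ε ∈ (0, 1/2], and let x be uniformly random over {0,1}^n. Let Y be any random variable taking values in {0,1}^q that is a (possibly randomized) function of x, where the extra randomness is independent of x. Then the number of indices i ∈ [n] for which there exists a Boolean function f : {0,1}^q → {0,1} with Pr[f(Y) = x_i] ≥ 1/2 + ε/4 is at most q / (1 − H(1/2 + ε/4)). -/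
open scoped ENNReal Classical

noncomputable def binaryEntropy (p : ℝ) : ℝ :=
  -p * Real.logb 2 p - (1 - p) * Real.logb 2 (1 - p)

/-!
Let `P` be the joint law of `(x, y)` and suppose bit `x i` is guessed from `y` by `f i` with
success probability at least `p i ≥ 1/2`. Let `g` be the law that draws `y` uniformly and then
each `x i` independently, equal to `f i y` with probability `p i`. The cross entropy of `P`
against `g` is at most `q log 2 + ∑ i, binEntropy (p i)`, since the factor for bit `i`
contributes `P(success) log (p i)⁻¹ + P(failure) log (1 - p i)⁻¹ ≤ binEntropy (p i)`.
By Gibbs' inequality it is at least the entropy of `P`, which is at least `n log 2` because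
`P ≤ 2⁻ⁿ` pointwise. With `p i = 1/2 + ε/4` on the `k` predictable bits and `1/2` elsewhere,
this reads `n ≤ q + k H(1/2 + ε/4) + (n - k)`.
-/

open Real Finset

lemma one_sub_binaryEntropy_eq (p : ℝ) :
    1 - binaryEntropy p = (log 2 - binEntropy p) / log 2 := by
  rw [binaryEntropy, binEntropy, logb, logb, log_inv, log_inv]
  field_simp
  ring

lemma mul_log_inv_add_mul_log_inv_le_binEntropy {p P : ℝ} (hp : 1 / 2 ≤ p) (hp1 : p < 1)
    (hpP : p ≤ P) : P * log p⁻¹ + (1 - P) * log (1 - p)⁻¹ ≤ binEntropy p := by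
  have : log p⁻¹ ≤ log (1 - p)⁻¹ :=
    log_le_log (by positivity) (inv_anti₀ (by linarith) (by linarith))
  rw [binEntropy]
  nlinarith

section FiniteDistribution

variable {α : Type*} [Fintype α] {P : α → ℝ}

lemma sum_mul_ite_eq (hP1 : ∑ a, P a = 1) (s : α → Prop) [DecidablePred s] (A B : ℝ) :
    ∑ a, P a * (if s a then A else B) =
      (∑ a ∈ univ.filter s, P a) * A + (1 - ∑ a ∈ univ.filter s, P a) * B := by
  have hcompl : ∑ a ∈ univ.filter (fun a => ¬s a), P a = 1 - ∑ a ∈ univ.filter s, P a := by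
    rw [← hP1, ← sum_filter_add_sum_filter_not univ s P]
    ring
  simp only [mul_ite, sum_ite, ← sum_mul, hcompl]

lemma sum_mul_log_inv_ite_le_binEntropy (hP1 : ∑ a, P a = 1) {s : α → Prop} [DecidablePred s]
    {p : ℝ} (hp : 1 / 2 ≤ p) (hp1 : p < 1) (hps : p ≤ ∑ a ∈ univ.filter s, P a) :
    ∑ a, P a * log (if s a then p else 1 - p)⁻¹ ≤ binEntropy p := by
  simp only [apply_ite (fun x => log x⁻¹)]
  rw [sum_mul_ite_eq hP1]
  exact mul_log_inv_add_mul_log_inv_le_binEntropy hp hp1 hps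

lemma exists_half_le_sum_filter_eq (hP1 : ∑ a, P a = 1) (c : α → Bool) :
    ∃ b : Bool, 1 / 2 ≤ ∑ a ∈ univ.filter (fun a => b = c a), P a := by
  by_contra! h
  have : ∑ a ∈ univ.filter (fun a => true = c a), P a +
      ∑ a ∈ univ.filter (fun a => false = c a), P a = 1 := by
    rw [← hP1, ← sum_filter_add_sum_filter_not univ (fun a => true = c a)]
    congr 2
    ext a
    cases c a <;> simp
  linarith [h true, h false]

/-- Gibbs' inequality, weakened through `P ≤ u`. -/
lemma log_inv_le_sum_mul_log_inv {g : α → ℝ} {u : ℝ} (hu : 0 < u) (hP0 : ∀ a, 0 ≤ P a)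
    (hPu : ∀ a, P a ≤ u) (hP1 : ∑ a, P a = 1) (hg : ∀ a, 0 < g a) (hg1 : ∑ a, g a ≤ 1) :
    log u⁻¹ ≤ ∑ a, P a * log (g a)⁻¹ := by
  have key : ∀ a, P a * log (g a / u) ≤ g a - P a := fun a => calc
    P a * log (g a / u) ≤ P a * (g a / u - 1) :=
      mul_le_mul_of_nonneg_left (log_le_sub_one_of_pos (div_pos (hg a) hu)) (hP0 a)
    _ = P a / u * g a - P a := by ring
    _ ≤ g a - P a := by
      gcongr
      exact mul_le_of_le_one_left (hg a).le ((div_le_one hu).2 (hPu a))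
  have hlog : ∀ a, log (g a / u) = log u⁻¹ - log (g a)⁻¹ := fun a => by
    rw [log_div (hg a).ne' hu.ne', log_inv, log_inv]; ring
  have := sum_le_sum fun a (_ : a ∈ univ) => key a
  simp only [hlog, mul_sub, sum_sub_distrib, ← sum_mul, hP1] at this
  linarith

end FiniteDistribution

lemma sum_ite_mem_const_eq {ι : Type*} [Fintype ι] [DecidableEq ι] (S : Finset ι) (a b : ℝ) :
    ∑ i, (if i ∈ S then a else b) = #S * a + (Fintype.card ι - #S) * b := by
  have hcompl : #{i | i ∉ S} = Fintype.card ι - #S := by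
    rw [← card_compl]; congr 1; ext; simp
  rw [sum_ite, filter_mem_eq_inter, univ_inter, sum_const, sum_const, hcompl,
    nsmul_eq_mul, nsmul_eq_mul, Nat.cast_sub (card_le_univ S)]

lemma sum_pi_prod_eq_one {ι : Type*} [Fintype ι] [DecidableEq ι] {ρ : ι → Bool → ℝ}
    (hρ : ∀ i, ρ i true + ρ i false = 1) : ∑ x : ι → Bool, ∏ i, ρ i (x i) = 1 := by
  simp [← Fintype.prod_sum, hρ]

theorem card_mul_log_two_le_log_card_add_sum_binEntropy {ι β : Type*} [Fintype ι]
    [DecidableEq ι] [Fintype β] {P : (ι → Bool) × β → ℝ} (hP0 : ∀ t, 0 ≤ P t)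
    (hP1 : ∑ t, P t = 1) (hPu : ∀ t, P t ≤ (2 ^ Fintype.card ι)⁻¹) (f : ι → β → Bool)
    {p : ι → ℝ} (hp : ∀ i, 1 / 2 ≤ p i) (hp1 : ∀ i, p i < 1)
    (hf : ∀ i, p i ≤ ∑ t ∈ univ.filter (fun t => f i t.2 = t.1 i), P t) :
    Fintype.card ι * log 2 ≤ log (Fintype.card β) + ∑ i, binEntropy (p i) := by
  set ρ : ι → Bool → β → ℝ := fun i b y => if f i y = b then p i else 1 - p i
  set g : (ι → Bool) × β → ℝ := fun t =>
    (Fintype.card β : ℝ)⁻¹ * ∏ i, ρ i (t.1 i) t.2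
  have hρ : ∀ i b y, 0 < ρ i b y := fun i b y => by
    have := hp i; have := hp1 i
    dsimp only [ρ]; split_ifs <;> linarith
  have hg : ∀ t, 0 < g t := fun t => by
    have : Nonempty β := ⟨t.2⟩
    exact mul_pos (by positivity) (prod_pos fun i _ => hρ i _ _)
  have hg1 : ∑ t, g t ≤ 1 := by
    have hρ1 : ∀ y, ∑ x : ι → Bool, ∏ i, ρ i (x i) y = 1 := fun y =>
      sum_pi_prod_eq_one (ρ := fun i b => ρ i b y) fun i => by
        dsimp only [ρ]; cases f i y <;> simp
    rw [Fintype.sum_prod_type, sum_comm]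
    simp only [g, ← mul_sum, hρ1, sum_const, card_univ, nsmul_eq_mul, mul_one]
    exact mul_inv_le_one
  have hlog (t) : log (g t)⁻¹ = log (Fintype.card β) + ∑ i, log (ρ i (t.1 i) t.2)⁻¹ := by
    have : Nonempty β := ⟨t.2⟩
    have hρinv : ∀ i, (ρ i (t.1 i) t.2)⁻¹ ≠ 0 := fun i => (inv_pos.2 (hρ i _ _)).ne'
    rw [mul_inv, inv_inv, ← prod_inv_distrib, log_mul (by positivity) (prod_ne_zero_iff.2
      fun i _ => hρinv i), log_prod fun i _ => hρinv i]
  calc (Fintype.card ι : ℝ) * log 2 = log ((2 : ℝ) ^ Fintype.card ι)⁻¹⁻¹ := by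
        rw [inv_inv, log_pow]
    _ ≤ ∑ t, P t * log (g t)⁻¹ :=
        log_inv_le_sum_mul_log_inv (by positivity) hP0 hPu hP1 hg hg1
    _ = log (Fintype.card β) + ∑ i, ∑ t, P t * log (ρ i (t.1 i) t.2)⁻¹ := by
        simp only [hlog, mul_add, mul_sum, sum_add_distrib, ← sum_mul, hP1, one_mul]
        rw [sum_comm]
    _ ≤ log (Fintype.card β) + ∑ i, binEntropy (p i) := by
        gcongr with i
        exact sum_mul_log_inv_ite_le_binEntropy hP1 (hp i) (hp1 i) (hf i)

lemma PMF.bind_map_prodMk_apply {α β : Type*} (p : PMF α) (K : α → PMF β) (a : α) (b : β) :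
    (p.bind fun a => (K a).map (Prod.mk a)) (a, b) = p a * K a b := by
  rw [bind_apply, tsum_eq_single a fun a' ha' => by simp [map_apply, Ne.symm ha']]
  rw [map_apply, tsum_eq_single b fun b' hb' => by simp [Ne.symm hb']]
  simp

lemma PMF.toReal_bind_uniformOfFintype_map_prodMk_le {α β : Type*} [Fintype α] [Nonempty α]
    (K : α → PMF β) (t : α × β) :
    (((PMF.uniformOfFintype α).bind fun a => (K a).map (Prod.mk a)) t).toReal ≤
      (Fintype.card α : ℝ)⁻¹ := by
  rw [PMF.bind_map_prodMk_apply, PMF.uniformOfFintype_apply, ENNReal.toReal_mul]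
  refine (mul_le_of_le_one_right ENNReal.toReal_nonneg ?_).trans_eq (by simp)
  exact ENNReal.toReal_le_of_le_ofReal zero_le_one (by simpa using (K t.1).coe_le_one t.2)

lemma PMF.sum_toReal {α : Type*} [Fintype α] (p : PMF α) : ∑ a, (p a).toReal = 1 := by
  have := p.tsum_coe
  rw [tsum_fintype] at this
  rw [← ENNReal.toReal_sum fun a _ => p.apply_ne_top a, this, ENNReal.toReal_one]

lemma PMF.ofReal_le_toOuterMeasure_setOf_iff {α : Type*} [Fintype α] (p : PMF α)
    (s : α → Prop) [DecidablePred s] {r : ℝ} :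
    ENNReal.ofReal r ≤ p.toOuterMeasure {a | s a} ↔
      r ≤ ∑ a ∈ univ.filter s, (p a).toReal := by
  have hfin : p.toOuterMeasure {a | s a} ≠ ⊤ := by
    rw [toOuterMeasure_apply]; exact p.tsum_coe_indicator_ne_top _
  rw [ENNReal.ofReal_le_iff_le_toReal hfin, toOuterMeasure_apply_fintype,
    ENNReal.toReal_sum fun a _ => ne_top_of_le_ne_top (p.apply_ne_top a)
      (Set.indicator_le_self _ _ a), sum_filter]
  simp [Set.indicator_apply, apply_ite ENNReal.toReal]

theorem few_indices_predictable_from_few_bits_general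
    (q n : ℕ) (ε : ℝ) (hε : ε ∈ Set.Ioc (0 : ℝ) (1 / 2))
    (Y : (Fin n → Bool) → PMF (Fin q → Bool)) :
    ((Finset.univ.filter fun i : Fin n =>
        ∃ f : (Fin q → Bool) → Bool,
          ENNReal.ofReal (1 / 2 + ε / 4) ≤
            (((PMF.uniformOfFintype (Fin n → Bool)).bind fun x =>
                (Y x).map fun y => (x, y))).toOuterMeasure
              {t | f t.2 = t.1 i}).card : ℝ) ≤
      q / (1 - binaryEntropy (1 / 2 + ε / 4)) := by
  obtain ⟨hε0, hε2⟩ := hε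
  set δ : ℝ := 1 / 2 + ε / 4 with hδ
  set μ := (PMF.uniformOfFintype (Fin n → Bool)).bind fun x => (Y x).map fun y => (x, y)
  set S := univ.filter fun i : Fin n =>
    ∃ f : (Fin q → Bool) → Bool, ENNReal.ofReal δ ≤ μ.toOuterMeasure {t | f t.2 = t.1 i}
  have hμ (t) : (μ t).toReal ≤ (2 ^ Fintype.card (Fin n))⁻¹ :=
    (PMF.toReal_bind_uniformOfFintype_map_prodMk_le Y t).trans_eq (by simp)
  have hguess : ∀ i, ∃ f : (Fin q → Bool) → Bool,
      (if i ∈ S then δ else 1 / 2) ≤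
        ∑ t ∈ univ.filter (fun t => f t.2 = t.1 i), (μ t).toReal := by
    intro i
    split_ifs with hi
    · obtain ⟨f, hf⟩ := (mem_filter.1 hi).2
      exact ⟨f, (μ.ofReal_le_toOuterMeasure_setOf_iff _).1 hf⟩
    · obtain ⟨b, hb⟩ := exists_half_le_sum_filter_eq μ.sum_toReal fun t => t.1 i
      exact ⟨fun _ => b, hb⟩
  choose f hf using hguess
  have hbits := card_mul_log_two_le_log_card_add_sum_binEntropy (fun _ => ENNReal.toReal_nonneg)
    μ.sum_toReal hμ f (fun i => by split_ifs <;> linarith) (fun i => by split_ifs <;> linarith) hf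
  simp only [apply_ite binEntropy, one_div, binEntropy_two_inv, sum_ite_mem_const_eq,
    Fintype.card_fin, Fintype.card_pi, Fintype.card_bool, prod_const, card_univ, Nat.cast_pow,
    Nat.cast_ofNat, log_pow] at hbits
  have hB : binEntropy δ < log 2 := binEntropy_lt_log_two.2 (by linarith)
  rw [one_sub_binaryEntropy_eq, div_div_eq_mul_div, le_div_iff₀ (sub_pos.2 hB)]
  linarith

/-- Let `q ≥ 1`, `ε ∈ (0,1/2]`, and let `x` be uniform over
`{0,1}^n`.  Let `Y` be any randomized function of `x` with values in `{0,1}^q` (given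
by its conditional distribution `Y x`, the extra randomness being independent of `x`).
Then the number of indices `i` for which some Boolean function `f : {0,1}^q → {0,1}`
predicts `x i` from `Y` with probability at least `1/2 + ε/4` is at most
`q / (1 − H(1/2 + ε/4))`. -/
theorem few_indices_predictable_from_few_bits
    (q n : ℕ) (hq : 1 ≤ q) (ε : ℝ) (hε : ε ∈ Set.Ioc (0 : ℝ) (1 / 2))
    (Y : (Fin n → Bool) → PMF (Fin q → Bool)) :
    ((Finset.univ.filter fun i : Fin n =>
        ∃ f : (Fin q → Bool) → Bool,
          ENNReal.ofReal (1 / 2 + ε / 4) ≤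
            (((PMF.uniformOfFintype (Fin n → Bool)).bind fun x =>
                (Y x).map fun y => (x, y))).toOuterMeasure
              {t | f t.2 = t.1 i}).card : ℝ) ≤
      q / (1 - binaryEntropy (1 / 2 + ε / 4)) :=
  few_indices_predictable_from_few_bits_general q n ε hε Y
end

section
/- Hadamard decoding identity for the padded Hadamard code: fix integers t, n ≥ 1 and 0 ≤ i ≤ n−1. If a ∈ {0, 1, …, 2^{tn} − 2^{ti} − 1} is good for i, then for every x ∈ {0,1}^n, f_{x^{(t)}}(a) ⊕ f_{x^{(t)}}(a + 2^{ti}) = x_i. -/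
open scoped Classical

/-- `hadF tn z a` is the Hadamard-code bit `⊕_{j<tn} a_j·z_j`, where `a_j` are the
binary digits of `a`: the inner product mod 2 of the digit vector of `a` with `z`. -/
def hadF (tn : ℕ) (z : ℕ → Bool) (a : ℕ) : Bool :=
  decide ((((Finset.range tn).filter fun j => a.testBit j && z j).card) % 2 = 1)

/-- `paddedMsg t n x` is the string `x^(t) ∈ {0,1}^(tn)`: each bit of `x` followed by
`t − 1` zeros, so that bit `t·i` equals `x i` and all other bits are `0` (viewed as a
function on `ℕ`, zero outside the relevant range). -/
def paddedMsg (t n : ℕ) (x : Fin n → Bool) : ℕ → Bool := fun j =>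
  if h : j % t = 0 ∧ j / t < n then x ⟨j / t, h.2⟩ else false

/-- `a` is *good* for `i` if it is **not** the case that all binary digits `a_j` with
`t·i ≤ j ≤ t·(i+1) − 1` equal `1`. -/
def goodFor (t i a : ℕ) : Prop :=
  ¬ ∀ j ∈ Finset.Ico (t * i) (t * (i + 1)), a.testBit j = true

/-! Adding `2 ^ (t i)` to `a` leaves the digits below `t i` alone and flips digit `t i`; the
carry it starts dies at the first zero digit of `a` in block `i`, which exists because `a` is
good for `i`, so all digits above block `i` are unchanged too. Inside block `i` the padded
message vanishes except at `t i`, where it is `x i`. Hence the two inner products differ in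
exactly one term, and that term is `x i`. -/

namespace Nat

theorem mod_two_pow_succ_lt_of_testBit_eq_false {a k : ℕ} (hk : a.testBit k = false) :
    a % 2 ^ (k + 1) < 2 ^ k := by
  refine lt_pow_two_of_testBit _ fun j hj => ?_
  rw [testBit_mod_two_pow]
  rcases hj.eq_or_lt with rfl | hkj
  · simp [hk]
  · simp [show ¬ j < k + 1 by omega]

/-- A zero bit at position `k ≥ m` absorbs the carry of adding `2 ^ m`. -/
theorem add_two_pow_div_two_pow_succ_of_testBit_eq_false {a m k : ℕ}
    (hk : a.testBit k = false) (hmk : m ≤ k) : (a + 2 ^ m) / 2 ^ (k + 1) = a / 2 ^ (k + 1) := by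
  have hlow : a % 2 ^ (k + 1) + 2 ^ m < 2 ^ (k + 1) := by
    have := mod_two_pow_succ_lt_of_testBit_eq_false hk
    have := Nat.pow_le_pow_right two_pos hmk
    have := pow_succ 2 k
    omega
  conv_lhs => rw [← mod_add_div a (2 ^ (k + 1)), add_right_comm,
    add_mul_div_left _ _ (by positivity), div_eq_of_lt hlow, zero_add]

theorem testBit_add_two_pow_of_testBit_eq_false {a m k j : ℕ} (hk : a.testBit k = false)
    (hmk : m ≤ k) (hkj : k < j) : (a + 2 ^ m).testBit j = a.testBit j := by
  obtain ⟨d, rfl⟩ : ∃ d, j = d + (k + 1) := ⟨j - (k + 1), by omega⟩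
  rw [← testBit_div_two_pow, ← testBit_div_two_pow,
    add_two_pow_div_two_pow_succ_of_testBit_eq_false hk hmk]

end Nat

theorem hadF_eq_bodd (tn : ℕ) (z : ℕ → Bool) (a : ℕ) :
    hadF tn z a = ((Finset.range tn).filter fun j => a.testBit j && z j).card.bodd := by
  rw [hadF, Nat.mod_two_of_bodd]
  cases Nat.bodd _ <;> rfl

theorem hadF_eq_xor_erase {tn m : ℕ} (hm : m < tn) (z : ℕ → Bool) (a : ℕ) :
    hadF tn z a = xor (((Finset.range tn).erase m).filter fun j => a.testBit j && z j).card.bodd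
      (a.testBit m && z m) := by
  rw [hadF_eq_bodd, Finset.filter_erase]
  by_cases hmem : (a.testBit m && z m) = true
  · have hm' : m ∈ (Finset.range tn).filter fun j => a.testBit j && z j :=
      Finset.mem_filter.mpr ⟨Finset.mem_range.mpr hm, hmem⟩
    rw [← Finset.card_erase_add_one hm', Nat.bodd_add, hmem]
    rfl
  · have hm' : m ∉ (Finset.range tn).filter fun j => a.testBit j && z j :=
      fun h => hmem (Finset.mem_filter.mp h).2
    rw [Finset.erase_eq_of_notMem hm', Bool.eq_false_iff.mpr hmem, Bool.xor_false]

theorem hadF_xor_hadF_of_agree_off {tn m : ℕ} (hm : m < tn) (z : ℕ → Bool) {a b : ℕ}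
    (hab : ∀ j < tn, j ≠ m → (a.testBit j && z j) = (b.testBit j && z j)) :
    xor (hadF tn z a) (hadF tn z b) = (xor (a.testBit m) (b.testBit m) && z m) := by
  have hrest : (((Finset.range tn).erase m).filter fun j => a.testBit j && z j) =
      ((Finset.range tn).erase m).filter fun j => b.testBit j && z j := by
    refine Finset.filter_congr fun j hj => ?_
    rw [Finset.mem_erase, Finset.mem_range] at hj
    rw [hab j hj.2 hj.1]
  rw [hadF_eq_xor_erase hm, hadF_eq_xor_erase hm, hrest, Bool.and_xor_distrib_right]
  cases Nat.bodd _ <;> simp only [Bool.false_xor, Bool.true_xor, Bool.not_xor_not]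

theorem paddedMsg_mul {t n : ℕ} (ht : 0 < t) (x : Fin n → Bool) (i : Fin n) :
    paddedMsg t n x (t * i) = x i := by
  have hdiv : t * (i : ℕ) / t = i := Nat.mul_div_cancel_left _ ht
  simp [paddedMsg, hdiv]

theorem paddedMsg_of_not_dvd {t n j : ℕ} (x : Fin n → Bool) (hj : ¬ t ∣ j) :
    paddedMsg t n x j = false := by
  simp [paddedMsg, Nat.dvd_iff_mod_eq_zero.not.mp hj]

theorem padded_hadamard_decoding_identity_general
    (t n : ℕ) (i : Fin n) (a : ℕ)
    (hgood : goodFor t (i : ℕ) a)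
    (x : Fin n → Bool) :
    xor (hadF (t * n) (paddedMsg t n x) a)
        (hadF (t * n) (paddedMsg t n x) (a + 2 ^ (t * (i : ℕ)))) = x i := by
  obtain ⟨k, hmk, hkt, hak⟩ : ∃ k, t * i ≤ k ∧ k < t * i + t ∧ a.testBit k = false := by
    simpa [goodFor, Nat.mul_succ] using hgood
  have ht : 0 < t := by omega
  have hm : t * (i : ℕ) < t * n := Nat.mul_lt_mul_of_pos_left i.isLt ht
  rw [hadF_xor_hadF_of_agree_off hm _ fun j _ hj => ?_, add_comm a, Nat.testBit_two_pow_add_eq,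
    paddedMsg_mul ht, Bool.xor_not_self, Bool.true_and]
  rcases lt_or_gt_of_ne hj with hlt | hgt
  · rw [add_comm a, Nat.testBit_two_pow_add_gt hlt]
  by_cases hjk : j ≤ k
  · have hj_not_dvd : ¬ t ∣ j :=
      Nat.not_dvd_of_lt_of_lt_mul_succ hgt (by rw [Nat.mul_succ]; omega)
    rw [paddedMsg_of_not_dvd x hj_not_dvd, Bool.and_false, Bool.and_false]
  · rw [Nat.testBit_add_two_pow_of_testBit_eq_false hak hmk (by omega)]

/-- Hadamard decoding identity for the padded Hadamard code: if
`a ∈ {0, …, 2^(tn) − 2^(ti) − 1}` is good for `i`, then for every `x ∈ {0,1}^n`,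
`f_{x^(t)}(a) ⊕ f_{x^(t)}(a + 2^(ti)) = x i`. -/
theorem padded_hadamard_decoding_identity
    (t n : ℕ) (ht : 1 ≤ t) (hn : 1 ≤ n) (i : Fin n) (a : ℕ)
    (ha : a + 2 ^ (t * (i : ℕ)) < 2 ^ (t * n)) (hgood : goodFor t (i : ℕ) a)
    (x : Fin n → Bool) :
    xor (hadF (t * n) (paddedMsg t n x) a)
        (hadF (t * n) (paddedMsg t n x) (a + 2 ^ (t * (i : ℕ)))) = x i :=
  padded_hadamard_decoding_identity_general t n i a hgood x
end
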